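/- Let λ : J → ℤ_{≥0} be finitely supported. A finite-dimensional Ŷ_{r,n}^K-module M satisfies J_λ·M = 0 (i.e. M is a Y_{r,n}^{λ,K}-module) if and only if, for every μ ∈ C_r(n), the Ĥ_{μ_1}^K⊗⋯⊗Ĥ_{μ_r}^K-module Hom_{KT}(V(μ), I_μM) is annihilated by the corresponding cyclotomic relations, i.e. is a module over H_{μ_1}^{λ,K}⊗⋯⊗H_{μ_r}^{λ,K}. Consequently, the equivalence F : N ↦ ⊕_{μ∈C_r(n)} Hom_{KT}(V(μ), I_μN) restricts to an equivalence between the category of finite-dimensional Y_{r,n}^{λ,K}-modules and the category of finite-dimensional modules over H_{r,n}^{λ,K} := ⊕_{μ∈C_r(n)} H_{μ_1}^{λ,K}⊗⋯⊗H_{μ_r}^{λ,K}. -/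

import Mathlib

/- Common setup: the affine Yokonuma-Hecke algebra presented by generators and
relations, reduced words, Bruhat order, affine Hecke algebras (of tensor-product
type), isotypic components and induced modules. -/

set_option maxHeartbeats 1000000

open scoped TensorProduct

noncomputable section

namespace YH

/-- Generators of the affine Yokonuma-Hecke algebra: `t j` for `j : Fin n`,
`g i` (for `i` with `i+1 < n`, representing the transposition `(i, i+1)` in
0-based indexing), and `X1`, `X1inv` (the generator `X_1` and its inverse). -/
inductive YGen (n : ℕ) : Type
  | t (j : Fin n) : YGen n
  | g (i : ℕ) (h : i + 1 < n) : YGen n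
  | X1 : YGen n
  | X1inv : YGen n

variable (K : Type) [Field K] (r n : ℕ) (q : K)

/-- The free algebra on the generators. -/
abbrev FY := FreeAlgebra K (YGen n)

def tF (j : Fin n) : FY K n := FreeAlgebra.ι K (YGen.t j)
def gF (i : ℕ) (h : i + 1 < n) : FY K n := FreeAlgebra.ι K (YGen.g i h)
def X1F : FY K n := FreeAlgebra.ι K YGen.X1
def X1invF : FY K n := FreeAlgebra.ι K YGen.X1inv

/-- The idempotent `e_i = (1/r) ∑_{s=0}^{r-1} t_i^s t_{i+1}^{-s}` (as an element
of the free algebra, with `t_{i+1}^{-s}` written as `t_{i+1}^{(r-s) % r}`,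
using `t^r = 1`). -/
def eF (i : ℕ) (h : i + 1 < n) : FY K n :=
  (r : K)⁻¹ • ∑ s ∈ Finset.range r,
    tF K n ⟨i, by omega⟩ ^ s * tF K n ⟨i + 1, h⟩ ^ ((r - s) % r)

/-- The simple transposition `s_i = (i, i+1)` of `Fin n` (0-based). -/
def swapi (i : ℕ) (h : i + 1 < n) : Equiv.Perm (Fin n) :=
  Equiv.swap ⟨i, by omega⟩ ⟨i + 1, h⟩

/-- Defining relations of the affine Yokonuma-Hecke algebra `Ŷ_{r,n}(q)` over `K`. -/
inductive YRel : FY K n → FY K n → Prop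
  | gg {i j : ℕ} (hi : i + 1 < n) (hj : j + 1 < n) (hij : i + 2 ≤ j ∨ j + 2 ≤ i) :
      YRel (gF K n i hi * gF K n j hj) (gF K n j hj * gF K n i hi)
  | braid {i : ℕ} (h : i + 2 < n) :
      YRel (gF K n i (by omega) * gF K n (i + 1) h * gF K n i (by omega))
        (gF K n (i + 1) h * gF K n i (by omega) * gF K n (i + 1) h)
  | tt (i j : Fin n) : YRel (tF K n i * tF K n j) (tF K n j * tF K n i)
  | gt {i : ℕ} (hi : i + 1 < n) (j : Fin n) :
      YRel (gF K n i hi * tF K n j) (tF K n (swapi n i hi j) * gF K n i hi)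
  | tr (j : Fin n) : YRel (tF K n j ^ r) 1
  | gsq {i : ℕ} (hi : i + 1 < n) :
      YRel (gF K n i hi * gF K n i hi)
        (1 + (q - q⁻¹) • (eF K r n i hi * gF K n i hi))
  | XXinv : YRel (X1F K n * X1invF K n) 1
  | XinvX : YRel (X1invF K n * X1F K n) 1
  | gXgX (h : 1 < n) :
      YRel (gF K n 0 (by omega) * X1F K n * gF K n 0 (by omega) * X1F K n)
        (X1F K n * gF K n 0 (by omega) * X1F K n * gF K n 0 (by omega))
  | gX {i : ℕ} (hi : i + 1 < n) (h1 : 1 ≤ i) :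
      YRel (gF K n i hi * X1F K n) (X1F K n * gF K n i hi)
  | tX (j : Fin n) : YRel (tF K n j * X1F K n) (X1F K n * tF K n j)

/-- The affine Yokonuma-Hecke algebra `Ŷ_{r,n}^K`. -/
abbrev Y := RingQuot (YRel K r n q)

def mkY : FY K n →ₐ[K] Y K r n q := RingQuot.mkAlgHom K (YRel K r n q)

/-- The generator `t_j` (0-based `j`). -/
def t (j : Fin n) : Y K r n q := mkY K r n q (tF K n j)
/-- The generator `g_i` (0-based `i`, `i+1 < n`). -/
def g (i : ℕ) (h : i + 1 < n) : Y K r n q := mkY K r n q (gF K n i h)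
/-- The idempotent `e_i`. -/
def e (i : ℕ) (h : i + 1 < n) : Y K r n q := mkY K r n q (eF K r n i h)
def X1 : Y K r n q := mkY K r n q (X1F K n)
def X1inv : Y K r n q := mkY K r n q (X1invF K n)

/-- `X_{i+1} := g_i X_i g_i`, recursively. -/
def Xrec : (k : ℕ) → k < n → Y K r n q
  | 0, _ => X1 K r n q
  | k + 1, h => g K r n q k (by omega) * Xrec k (by omega) * g K r n q k (by omega)

/-- The commuting elements `X_j` (0-based `j`). -/
def X (j : Fin n) : Y K r n q := Xrec K r n q j.1 j.2

/-! ### Words and reduced expressions -/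

/-- A word in the simple transpositions. -/
abbrev Word := List {i : ℕ // i + 1 < n}

/-- The permutation represented by a word. -/
def permOfWord (l : Word n) : Equiv.Perm (Fin n) :=
  (l.map fun i => swapi n i.1 i.2).prod

/-- `l` is a reduced word for `w`. -/
def IsReducedWord (l : Word n) (w : Equiv.Perm (Fin n)) : Prop :=
  permOfWord n l = w ∧ ∀ l' : Word n, permOfWord n l' = w → l.length ≤ l'.length

/-- The product `g_{i_1} ⋯ g_{i_k}` along a word. -/
def gword (l : Word n) : Y K r n q := (l.map fun i => g K r n q i.1 i.2).prod

/-- `gw` is the family `w ↦ g_w`, i.e. `g_w` is the product of the `g_i` along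
any reduced expression of `w` (well defined by Matsumoto's lemma). -/
def GwSpec (gw : Equiv.Perm (Fin n) → Y K r n q) : Prop :=
  ∀ (w : Equiv.Perm (Fin n)) (l : Word n), IsReducedWord n l w → gw w = gword K r n q l

/-- Bruhat order: `u ≤ w` iff some reduced word of `w` has a subword which is a
reduced word of `u`. -/
def BruhatLE (u w : Equiv.Perm (Fin n)) : Prop :=
  ∃ l : Word n, IsReducedWord n l w ∧ ∃ l' : Word n, l'.Sublist l ∧ IsReducedWord n l' u

def BruhatLT (u w : Equiv.Perm (Fin n)) : Prop := BruhatLE n u w ∧ u ≠ w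

/-! ### Monomials and distinguished subalgebras -/

/-- `XU` is a family of units lifting the commuting elements `X_j` (each `X_j`
is invertible in `Ŷ_{r,n}^K`). -/
def XUSpec (XU : Fin n → (Y K r n q)ˣ) : Prop :=
  ∀ j, (XU j : Y K r n q) = X K r n q j

/-- The monomial `X^α = X_1^{α_1} ⋯ X_n^{α_n}`, `α ∈ ℤ^n`. -/
def Xpow (XU : Fin n → (Y K r n q)ˣ) (α : Fin n → ℤ) : Y K r n q :=
  ((List.finRange n).map fun j => ((XU j ^ α j : (Y K r n q)ˣ) : Y K r n q)).prod

/-- The monomial `t^β = t_1^{β_1} ⋯ t_n^{β_n}`, `β ∈ (ℤ/rℤ)^n`. -/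
def tpow (β : Fin n → ZMod r) : Y K r n q :=
  ((List.finRange n).map fun j => t K r n q j ^ (β j).val).prod

/-- The subalgebra `KT` generated by `t_1, …, t_n` (the group algebra of
`T = (ℤ/rℤ)^n`). -/
def KT : Subalgebra K (Y K r n q) := Algebra.adjoin K (Set.range (t K r n q))

/-- The Laurent polynomial subalgebra `P_n^K` generated by `X_1^{±1}, …, X_n^{±1}`. -/
def Pn (XU : Fin n → (Y K r n q)ˣ) : Subalgebra K (Y K r n q) :=
  Algebra.adjoin K
    ((Set.range fun j => ((XU j : (Y K r n q)ˣ) : Y K r n q)) ∪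
      (Set.range fun j => (((XU j)⁻¹ : (Y K r n q)ˣ) : Y K r n q)))

/-- The subalgebra `P_n^K(T)` generated by `t_1, …, t_n` and `X_1^{±1}, …, X_n^{±1}`. -/
def PT (XU : Fin n → (Y K r n q)ˣ) : Subalgebra K (Y K r n q) :=
  Algebra.adjoin K
    (Set.range (t K r n q) ∪
      (Set.range fun j => ((XU j : (Y K r n q)ˣ) : Y K r n q)) ∪
      (Set.range fun j => (((XU j)⁻¹ : (Y K r n q)ˣ) : Y K r n q)))

/-- The subalgebra of `Ŷ_{r,n}^K` generated by all `t_j`, all `X_j^{±1}`, and the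
`g_w` for `w` in a set `W` of permutations (e.g. a Young subgroup). -/
def Ysub (XU : Fin n → (Y K r n q)ˣ) (gw : Equiv.Perm (Fin n) → Y K r n q)
    (W : Set (Equiv.Perm (Fin n))) : Subalgebra K (Y K r n q) :=
  Algebra.adjoin K
    (Set.range (t K r n q) ∪
      (Set.range fun j => ((XU j : (Y K r n q)ˣ) : Y K r n q)) ∪
      (Set.range fun j => (((XU j)⁻¹ : (Y K r n q)ˣ) : Y K r n q)) ∪
      (gw '' W))

/-- The Young subgroup `S_μ` attached to a block function `c : Fin n → Fin r`
(for monotone `c`, this is the Young subgroup of the composition `μ` whose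
parts are the fiber sizes of `c`): permutations preserving the blocks. -/
def Smu (c : Fin n → Fin r) : Set (Equiv.Perm (Fin n)) :=
  {w : Equiv.Perm (Fin n) | ∀ j, c (w j) = c j}

/-- Permutations fixing all positions `≥ m` (the subgroup `S_m ⊆ S_n`). -/
def SFix (m : ℕ) : Set (Equiv.Perm (Fin n)) :=
  {w : Equiv.Perm (Fin n) | ∀ j : Fin n, m ≤ j.1 → w j = j}

/-! ### Isotypic components -/

section Modules

variable (M : Type) [AddCommGroup M] [Module K M] [Module (Y K r n q) M]
  [IsScalarTower K (Y K r n q) M]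

/-- The `V(μ)`-isotypic component of `M` as a `KT`-module: since `V(μ)` is the
one-dimensional `KT`-module on which `t_j` acts by the scalar `ζ^{c j}`, this is
the simultaneous eigenspace. Here `ζ` is a primitive `r`-th root of unity and
the simple `K(ℤ/rℤ)`-modules are `V_k : t ↦ ζ^{k}`, `k : Fin r`. -/
def Imu (ζ : K) (c : Fin n → Fin r) : Submodule K M where
  carrier := {m : M | ∀ j : Fin n, t K r n q j • m = ζ ^ ((c j : ℕ)) • m}
  add_mem' := by
    intro a b ha hb
    intro j
    rw [smul_add, ha j, hb j, smul_add]
  zero_mem' := by intro j; simp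
  smul_mem' := by
    intro k m hm
    intro j
    rw [smul_comm, hm j, smul_comm]

/-- `M_μ := ∑_{w ∈ S_n} g_w (I_μ M)`. -/
def Mmu (ζ : K) (c : Fin n → Fin r) (gw : Equiv.Perm (Fin n) → Y K r n q) :
    Submodule K M :=
  Submodule.span K
    {x : M | ∃ w : Equiv.Perm (Fin n), ∃ m ∈ Imu K r n q M ζ c, x = gw w • m}

end Modules

/-! ### Affine Hecke algebras of type A (tensor-product form)

`HH K q n r c` is the tensor product `Ĥ_{μ_1}^K ⊗ ⋯ ⊗ Ĥ_{μ_r}^K` of affine Hecke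
algebras, presented globally: generators `T_i` for those adjacencies `i, i+1`
lying in a common block of `c : Fin n → Fin r`, and invertible `Y_j` for all
`j`.  (For `r = 1` and `c` constant this is the affine Hecke algebra `Ĥ_n^K`.) -/

inductive HGen (n r : ℕ) (c : Fin n → Fin r) : Type
  | T (i : ℕ) (h : i + 1 < n) (hc : c ⟨i, by omega⟩ = c ⟨i + 1, h⟩) : HGen n r c
  | Y (j : Fin n) : HGen n r c
  | Yinv (j : Fin n) : HGen n r c

end YH

namespace YH

variable (K : Type) [Field K] (q : K) {n r : ℕ}

abbrev FH (c : Fin n → Fin r) := FreeAlgebra K (HGen n r c)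

def TFh (c : Fin n → Fin r) (i : ℕ) (h : i + 1 < n)
    (hc : c ⟨i, by omega⟩ = c ⟨i + 1, h⟩) : FH K c :=
  FreeAlgebra.ι K (HGen.T i h hc)
def YFh (c : Fin n → Fin r) (j : Fin n) : FH K c := FreeAlgebra.ι K (HGen.Y j)
def YinvFh (c : Fin n → Fin r) (j : Fin n) : FH K c := FreeAlgebra.ι K (HGen.Yinv j)

/-- Defining relations of the (tensor product of) affine Hecke algebra(s). -/
inductive HRel (c : Fin n → Fin r) : FH K c → FH K c → Prop
  | quad {i : ℕ} (h : i + 1 < n) (hc : c ⟨i, by omega⟩ = c ⟨i + 1, h⟩) :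
      HRel c ((TFh K c i h hc - algebraMap K (FH K c) q) *
          (TFh K c i h hc + algebraMap K (FH K c) q⁻¹)) 0
  | braid {i : ℕ} (h : i + 2 < n)
      (hc1 : c ⟨i, by omega⟩ = c ⟨i + 1, by omega⟩)
      (hc2 : c ⟨i + 1, by omega⟩ = c ⟨i + 2, h⟩) :
      HRel c
        (TFh K c i (by omega) hc1 * TFh K c (i + 1) (by omega) hc2 *
          TFh K c i (by omega) hc1)
        (TFh K c (i + 1) (by omega) hc2 * TFh K c i (by omega) hc1 *
          TFh K c (i + 1) (by omega) hc2)
  | TT {i j : ℕ} (hi : i + 1 < n) (hci : c ⟨i, by omega⟩ = c ⟨i + 1, hi⟩)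
      (hj : j + 1 < n) (hcj : c ⟨j, by omega⟩ = c ⟨j + 1, hj⟩)
      (hij : i + 2 ≤ j ∨ j + 2 ≤ i) :
      HRel c (TFh K c i hi hci * TFh K c j hj hcj)
        (TFh K c j hj hcj * TFh K c i hi hci)
  | YY (j k : Fin n) : HRel c (YFh K c j * YFh K c k) (YFh K c k * YFh K c j)
  | YYinv (j : Fin n) : HRel c (YFh K c j * YinvFh K c j) 1
  | YinvY (j : Fin n) : HRel c (YinvFh K c j * YFh K c j) 1
  | TYT {i : ℕ} (h : i + 1 < n) (hc : c ⟨i, by omega⟩ = c ⟨i + 1, h⟩) :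
      HRel c (TFh K c i h hc * YFh K c ⟨i, by omega⟩ * TFh K c i h hc)
        (YFh K c ⟨i + 1, h⟩)
  | TY {i : ℕ} (h : i + 1 < n) (hc : c ⟨i, by omega⟩ = c ⟨i + 1, h⟩)
      (j : Fin n) (hj1 : j.1 ≠ i) (hj2 : j.1 ≠ i + 1) :
      HRel c (TFh K c i h hc * YFh K c j) (YFh K c j * TFh K c i h hc)

/-- The algebra `Ĥ_{μ_1}^K ⊗ ⋯ ⊗ Ĥ_{μ_r}^K` (for `c` monotone with fiber sizes
`μ_k`); for `r = 1` it is the affine Hecke algebra `Ĥ_n^K` of type `A`. -/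
abbrev HH (c : Fin n → Fin r) := RingQuot (HRel K q c)

def mkH (c : Fin n → Fin r) : FH K c →ₐ[K] HH K q c := RingQuot.mkAlgHom K (HRel K q c)

/-- The generator `T_i` (for an adjacency internal to a block of `c`). -/
def Tg (c : Fin n → Fin r) (i : ℕ) (h : i + 1 < n)
    (hc : c ⟨i, by omega⟩ = c ⟨i + 1, h⟩) : HH K q c :=
  mkH K q c (TFh K c i h hc)
/-- The generator `Y_j`. -/
def Yg (c : Fin n → Fin r) (j : Fin n) : HH K q c := mkH K q c (YFh K c j)
/-- The generator `Y_j^{-1}`. -/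
def Yinvg (c : Fin n → Fin r) (j : Fin n) : HH K q c := mkH K q c (YinvFh K c j)

end YH

namespace YH

variable (K : Type) [Field K] (r n : ℕ) (q : K)

/-! ### Actions and induced modules -/

/-- The action of an algebra `R` on a module `M` as an algebra homomorphism
`R →ₐ[K] End_K(M)`. -/
def actHom (R : Type) [Ring R] [Algebra K R] (M : Type) [AddCommGroup M] [Module K M]
    [Module R M] [IsScalarTower K R M] : R →ₐ[K] Module.End K M where
  toFun a :=
    { toFun := fun m => a • m
      map_add' := fun x y => smul_add a x y
      map_smul' := fun k m => (smul_comm k a m).symm }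
  map_one' := by ext m; exact one_smul R m
  map_mul' a b := by ext m; exact mul_smul a b m
  map_zero' := by ext m; exact zero_smul R m
  map_add' a b := by ext m; exact add_smul a b m
  commutes' k := by
    ext m
    simp [Module.algebraMap_end_apply, algebraMap_smul]

/-- A `K`-space `P` with action `ρ` of an algebra `R` is "simple" if it is
nonzero and has no proper nonzero `ρ`-stable subspace. -/
def SimpleVia {R : Type} [Ring R] [Algebra K R] {P : Type} [AddCommGroup P] [Module K P]
    (ρ : R →ₐ[K] Module.End K P) : Prop :=
  Nontrivial P ∧
    ∀ Q : Submodule K P, (∀ h : R, ∀ v ∈ Q, ρ h v ∈ Q) → Q = ⊥ ∨ Q = ⊤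

/-- The relation submodule defining the induced module
`Ŷ_{r,n}^K ⊗_{Ŷ_{r,μ}^K} (V(μ) ⊗ P)`, where `P` is a module over
`Ĥ_{μ_1}^K ⊗ ⋯ ⊗ Ĥ_{μ_r}^K` (given by `ρ`), and `V(μ)` is the one-dimensional
`KT`-module attached to `c` (and a primitive `r`-th root of unity `ζ`):
we quotient `Ŷ_{r,n}^K ⊗_K P` by the `Ŷ`-span of the relations
`t_j ⊗ p = ζ^{c j} (1 ⊗ p)`, `g_i ⊗ p = 1 ⊗ T_i p` (`i` internal), and
`X_j ⊗ p = 1 ⊗ Y_j p`. -/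
def IndRel (ζ : K) (c : Fin n → Fin r) (P : Type) [AddCommGroup P] [Module K P]
    (ρ : HH K q c →ₐ[K] Module.End K P) :
    Submodule (Y K r n q) (Y K r n q ⊗[K] P) :=
  Submodule.span (Y K r n q)
    ({z : Y K r n q ⊗[K] P | ∃ (j : Fin n) (p : P),
        z = t K r n q j ⊗ₜ[K] p - (1 : Y K r n q) ⊗ₜ[K] (ζ ^ ((c j : ℕ)) • p)} ∪
      {z | ∃ (i : ℕ) (hi : i + 1 < n) (hc : c ⟨i, by omega⟩ = c ⟨i + 1, hi⟩) (p : P),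
        z = g K r n q i hi ⊗ₜ[K] p - (1 : Y K r n q) ⊗ₜ[K] (ρ (Tg K q c i hi hc) p)} ∪
      {z | ∃ (j : Fin n) (p : P),
        z = X K r n q j ⊗ₜ[K] p - (1 : Y K r n q) ⊗ₜ[K] (ρ (Yg K q c j) p)})

/-- The induced `Ŷ_{r,n}^K`-module `S_μ(L.) = Ŷ_{r,n}^K ⊗_{Ŷ_{r,μ}^K} (V(μ) ⊗ P)`. -/
def Ind (ζ : K) (c : Fin n → Fin r) (P : Type) [AddCommGroup P] [Module K P]
    (ρ : HH K q c →ₐ[K] Module.End K P) : Type :=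
  @HasQuotient.Quotient (Y K r n q ⊗[K] P) _
    (@Submodule.hasQuotient (Y K r n q) _ _ TensorProduct.addCommGroup _) (IndRel K r n q ζ c P ρ)

instance (ζ : K) (c : Fin n → Fin r) (P : Type) [AddCommGroup P] [Module K P]
    (ρ : HH K q c →ₐ[K] Module.End K P) : AddCommGroup (Ind K r n q ζ c P ρ) :=
  inferInstanceAs (AddCommGroup (@HasQuotient.Quotient (Y K r n q ⊗[K] P) _
    (@Submodule.hasQuotient (Y K r n q) _ _ TensorProduct.addCommGroup _) (IndRel K r n q ζ c P ρ)))

instance (ζ : K) (c : Fin n → Fin r) (P : Type) [AddCommGroup P] [Module K P]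
    (ρ : HH K q c →ₐ[K] Module.End K P) : Module (Y K r n q) (Ind K r n q ζ c P ρ) :=
  inferInstanceAs (Module (Y K r n q) (@HasQuotient.Quotient (Y K r n q ⊗[K] P) _
    (@Submodule.hasQuotient (Y K r n q) _ _ TensorProduct.addCommGroup _) (IndRel K r n q ζ c P ρ)))

/-- The map skipping position `p`: `j ↦ j` if `j < p`, else `j ↦ j+1`
(the order embedding `Fin (n-1) → Fin n` avoiding `p`). -/
def skipIns (p : ℕ) (j : Fin (n - 1)) : Fin n :=
  if j.1 < p then ⟨j.1, by have := j.2; omega⟩ else ⟨j.1 + 1, by have := j.2; omega⟩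

end YH
/-!
On the isotypic component `I_χ M` of `M` over `KT`, the quadratic relation of `g_i` degenerates to
`g_i² = 1` as soon as `χ i ≠ χ (i+1)`, because `e_i` vanishes there. So `g_i` exchanges `I_χ M` and
`I_{χ ∘ s_i} M` and intertwines `f(X_p)` with `f(X_{s_i p})` (for `p = i` this is
`X_{i+1} = g_i X_i g_i`), while `s_i` sends the first position of a fibre of `χ` to the first
position of the corresponding fibre of `χ ∘ s_i`. Hence "`f(X_p)` kills `I_χ M` for `p` first in its
`χ`-fibre" transfers along such swaps. Starting at `p = 1`, where it holds for all `χ` once `f(X_1)`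
kills `M`, these swaps reach every pair `(χ, p)`; conversely bubble sort connects every `χ` to a
monotone one, i.e. to a composition `μ`. Since `r` is invertible in `K`, `M` is the sum of its
isotypic components, and the annihilator of `M` is a two-sided ideal.
-/

open Polynomial

theorem Commute.aeval_right {R A : Type*} [CommSemiring R] [Semiring A] [Algebra R A]
    {a x : A} (h : Commute a x) (f : R[X]) : Commute a (aeval x f) := by
  induction f using Polynomial.induction_on' with
  | add f f' hf hf' => simpa only [map_add] using hf.add_right hf'
  | monomial k c =>
    rw [aeval_monomial]
    exact (Algebra.commute_algebraMap_right c a).mul_right (h.pow_right k)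

theorem geom_sum_eq_zero_of_pow_eq_one {F : Type*} [Field F] {u : F} {r : ℕ} (hu : u ≠ 1)
    (hur : u ^ r = 1) : ∑ s ∈ Finset.range r, u ^ s = 0 := by
  rw [geom_sum_eq hu, hur, sub_self, zero_div]

theorem pow_sub_mod_mul_pow {G : Type*} [Monoid G] {ω : G} {r s : ℕ} (hω : ω ^ r = 1)
    (hs : s < r) : ω ^ ((r - s) % r) * ω ^ s = 1 := by
  rw [← pow_add]
  rcases Nat.eq_zero_or_pos s with rfl | hs0
  · simp
  · rw [Nat.mod_eq_of_lt (by omega), Nat.sub_add_cancel hs.le, hω]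

theorem commute_mul_mul_of_semiconj {A : Type*} [Monoid A] {a a' b x : A} (h : a * b = b * a')
    (h' : a' * b = b * a) (hx : Commute a' x) : Commute a (b * x * b) := by
  unfold Commute SemiconjBy
  calc a * (b * x * b) = b * (a' * x) * b := by rw [← mul_assoc, ← mul_assoc, h, mul_assoc b]
    _ = b * x * (a' * b) := by rw [hx.eq]; simp only [mul_assoc]
    _ = b * x * b * a := by rw [h']; simp only [mul_assoc]

theorem commute_mul_mul_of_braid {A : Type*} [Monoid A] {a b x : A} (hab : a * b * a = b * a * b)
    (hbx : Commute b x) : Commute a (b * (a * x * a) * b) := by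
  unfold Commute SemiconjBy
  calc a * (b * (a * x * a) * b) = a * b * a * x * (a * b) := by simp only [mul_assoc]
    _ = b * a * (b * x) * (a * b) := by rw [hab]; simp only [mul_assoc]
    _ = b * a * x * (b * a * b) := by rw [hbx.eq]; simp only [mul_assoc]
    _ = b * (a * x * a) * b * a := by rw [← hab]; simp only [mul_assoc]

theorem aeval_mul_mul_smul_smul {R A M : Type*} [CommSemiring R] [Semiring A] [Algebra R A]
    [AddCommMonoid M] [Module R M] [Module A M] [IsScalarTower R A M] {g x : A} {W : Set M}
    (hxW : ∀ w ∈ W, x • w ∈ W) (hgW : ∀ w ∈ W, g • g • w = w) (f : R[X]) {w : M}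
    (hw : w ∈ W) : aeval (g * x * g) f • g • w = g • aeval x f • w := by
  have hpow : ∀ k, ∀ w ∈ W, x ^ k • w ∈ W ∧ (g * x * g) ^ k • g • w = g • x ^ k • w := by
    intro k
    induction k with
    | zero => exact fun w hw => by simp [hw]
    | succ k ih =>
      intro w hw
      obtain ⟨hmem, heq⟩ := ih w hw
      refine ⟨by rw [pow_succ', mul_smul]; exact hxW _ hmem, ?_⟩
      rw [pow_succ', mul_smul, heq, mul_smul, mul_smul, hgW _ hmem, pow_succ', mul_smul]
  induction f using Polynomial.induction_on' with
  | add f f' hf hf' => simp only [map_add, add_smul, hf, hf', smul_add]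
  | monomial k c =>
    simp only [aeval_monomial, mul_smul, algebraMap_smul, (hpow k w hw).2, smul_comm c]

theorem Fin.exists_succ_lt_of_not_monotone {α : Type*} [LinearOrder α] {n : ℕ} {χ : Fin n → α}
    (h : ¬Monotone χ) : ∃ i, ∃ hi : i + 1 < n, χ ⟨i + 1, hi⟩ < χ ⟨i, by omega⟩ := by
  cases n with
  | zero => exact absurd (fun a => Fin.elim0 a) h
  | succ n =>
    simp only [Fin.monotone_iff_le_succ, not_forall, not_le] at h
    obtain ⟨i, hi⟩ := h
    exact ⟨i, by omega, hi⟩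

theorem TwoSidedIdeal.smul_eq_zero_of_mem_span {R M : Type*} [Ring R] [AddCommGroup M] [Module R M]
    {s : Set R} (hs : ∀ x ∈ s, ∀ m : M, x • m = 0) {y : R} (hy : y ∈ TwoSidedIdeal.span s)
    (m : M) : y • m = 0 := by
  have hker : TwoSidedIdeal.span s ≤ TwoSidedIdeal.ker (Module.toAddMonoidEnd R M) :=
    TwoSidedIdeal.span_le.2 fun x hx => (TwoSidedIdeal.mem_ker _).2 (AddMonoidHom.ext (hs x hx))
  exact DFunLike.congr_fun ((TwoSidedIdeal.mem_ker _).1 (hker hy)) m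

namespace YH

section Swap

variable {n : ℕ}

lemma swapi_swapi (i : ℕ) (hi : i + 1 < n) (j : Fin n) : swapi n i hi (swapi n i hi j) = j :=
  Equiv.swap_apply_self _ _ _

lemma comp_swapi_comp_swapi {α : Type*} (i : ℕ) (hi : i + 1 < n) (χ : Fin n → α) :
    (χ ∘ swapi n i hi) ∘ swapi n i hi = χ :=
  funext fun j => congrArg χ (swapi_swapi i hi j)

lemma swapi_apply_left (i : ℕ) (hi : i + 1 < n) : swapi n i hi ⟨i, by omega⟩ = ⟨i + 1, hi⟩ :=
  Equiv.swap_apply_left _ _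

lemma swapi_apply_right (i : ℕ) (hi : i + 1 < n) : swapi n i hi ⟨i + 1, hi⟩ = ⟨i, by omega⟩ :=
  Equiv.swap_apply_right _ _

lemma val_swapi (i : ℕ) (hi : i + 1 < n) (j : Fin n) :
    (swapi n i hi j : ℕ) = if (j : ℕ) = i then i + 1 else if (j : ℕ) = i + 1 then i else j := by
  unfold swapi
  rw [Equiv.swap_apply_def]
  split_ifs <;> simp_all [Fin.ext_iff]

lemma comp_swapi_ne {α : Type*} {χ : Fin n → α} {i : ℕ} (hi : i + 1 < n)
    (hχ : χ ⟨i, by omega⟩ ≠ χ ⟨i + 1, hi⟩) :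
    (χ ∘ swapi n i hi) ⟨i, by omega⟩ ≠ (χ ∘ swapi n i hi) ⟨i + 1, hi⟩ := by
  simpa only [Function.comp_apply, swapi_apply_left, swapi_apply_right] using hχ.symm

lemma isLeast_fiber_comp_swapi {α : Type*} {χ : Fin n → α} {i : ℕ} (hi : i + 1 < n)
    (hχ : χ ⟨i, by omega⟩ ≠ χ ⟨i + 1, hi⟩) {p : Fin n} (hp : IsLeast {j | χ j = χ p} p) :
    IsLeast {j | (χ ∘ swapi n i hi) j = (χ ∘ swapi n i hi) (swapi n i hi p)}
      (swapi n i hi p) := by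
  refine ⟨rfl, fun j hj => ?_⟩
  simp only [Set.mem_ofPred_eq, Function.comp_apply, swapi_swapi] at hj
  have hle : p ≤ swapi n i hi j := hp.2 hj
  by_cases hji : (j : ℕ) = i ∧ (p : ℕ) = i
  · rw [show j = ⟨i, Nat.lt_of_succ_lt hi⟩ from Fin.ext hji.1,
      show p = ⟨i, Nat.lt_of_succ_lt hi⟩ from Fin.ext hji.2, swapi_apply_left] at hj
    exact absurd hj.symm hχ
  · rw [Fin.le_def, val_swapi] at hle ⊢
    split_ifs at hle ⊢ <;> omega

end Swap

section Relations

variable {K : Type} [Field K] {r n : ℕ} {q : K}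

lemma mkY_eq_of_rel {x y : FY K n} (h : YRel K r n q x y) : mkY K r n q x = mkY K r n q y :=
  RingQuot.mkAlgHom_rel K h

lemma commute_t_t (i j : Fin n) : Commute (t K r n q i) (t K r n q j) := by
  unfold Commute SemiconjBy
  simpa only [t, map_mul] using mkY_eq_of_rel (r := r) (q := q) (YRel.tt i j)

lemma t_pow_r (j : Fin n) : t K r n q j ^ r = 1 := by
  simpa only [t, map_pow, map_one] using mkY_eq_of_rel (q := q) (YRel.tr j)

lemma g_mul_t (i : ℕ) (hi : i + 1 < n) (j : Fin n) :
    g K r n q i hi * t K r n q j = t K r n q (swapi n i hi j) * g K r n q i hi := by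
  simpa only [t, g, map_mul] using mkY_eq_of_rel (r := r) (q := q) (YRel.gt hi j)

lemma t_mul_g (i : ℕ) (hi : i + 1 < n) (j : Fin n) :
    t K r n q j * g K r n q i hi = g K r n q i hi * t K r n q (swapi n i hi j) := by
  rw [g_mul_t, swapi_swapi]

lemma g_mul_g_self (i : ℕ) (hi : i + 1 < n) :
    g K r n q i hi * g K r n q i hi = 1 + (q - q⁻¹) • (e K r n q i hi * g K r n q i hi) := by
  simpa only [g, e, map_mul, map_add, map_one, map_smul] using
    mkY_eq_of_rel (YRel.gsq (r := r) (q := q) hi)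

lemma e_eq (i : ℕ) (hi : i + 1 < n) :
    e K r n q i hi = (r : K)⁻¹ • ∑ s ∈ Finset.range r,
      t K r n q ⟨i, by omega⟩ ^ s * t K r n q ⟨i + 1, hi⟩ ^ ((r - s) % r) := by
  simp only [e, eF, map_smul, map_sum, map_mul, map_pow]
  rfl

lemma commute_t_X1 (j : Fin n) : Commute (t K r n q j) (X1 K r n q) := by
  unfold Commute SemiconjBy
  simpa only [t, X1, map_mul] using mkY_eq_of_rel (r := r) (q := q) (YRel.tX j)

lemma commute_g_X1 (i : ℕ) (hi : i + 1 < n) (h1 : 1 ≤ i) :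
    Commute (g K r n q i hi) (X1 K r n q) := by
  unfold Commute SemiconjBy
  simpa only [g, X1, map_mul] using mkY_eq_of_rel (r := r) (q := q) (YRel.gX hi h1)

lemma commute_g_g (i j : ℕ) (hi : i + 1 < n) (hj : j + 1 < n) (hij : i + 2 ≤ j ∨ j + 2 ≤ i) :
    Commute (g K r n q i hi) (g K r n q j hj) := by
  unfold Commute SemiconjBy
  simpa only [g, map_mul] using mkY_eq_of_rel (r := r) (q := q) (YRel.gg hi hj hij)

lemma g_braid (i : ℕ) (h : i + 2 < n) :
    g K r n q i (by omega) * g K r n q (i + 1) h * g K r n q i (by omega)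
      = g K r n q (i + 1) h * g K r n q i (by omega) * g K r n q (i + 1) h := by
  simpa only [g, map_mul] using mkY_eq_of_rel (r := r) (q := q) (YRel.braid h)

lemma X_succ (i : ℕ) (hi : i + 1 < n) :
    X K r n q ⟨i + 1, hi⟩ = g K r n q i hi * X K r n q ⟨i, by omega⟩ * g K r n q i hi :=
  rfl

lemma commute_t_X (j k : Fin n) : Commute (t K r n q j) (X K r n q k) := by
  obtain ⟨k, hk⟩ := k
  induction k generalizing j with
  | zero => exact commute_t_X1 j
  | succ k ih =>
    rw [X_succ]
    exact commute_mul_mul_of_semiconj (t_mul_g k hk j)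
      (by rw [t_mul_g, swapi_swapi]) (ih _ (by omega))

lemma commute_g_X (i : ℕ) (hi : i + 1 < n) {k : ℕ} (hk : k < n) (hki : k ≠ i) (hki' : k ≠ i + 1) :
    Commute (g K r n q i hi) (X K r n q ⟨k, hk⟩) := by
  induction k using Nat.strong_induction_on generalizing i with
  | _ k ih =>
    rcases k with _ | k
    · exact commute_g_X1 i hi (by omega)
    rw [X_succ]
    by_cases hbr : k = i + 1
    · subst hbr
      rw [X_succ i]
      exact commute_mul_mul_of_braid (g_braid i hk)
        (ih i (by omega) (i + 1) hk (by omega) (by omega) (by omega))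
    · have hgg := commute_g_g (K := K) (r := r) (q := q) i k hi hk (by omega)
      exact (hgg.mul_right (ih k (by omega) i hi (by omega) (by omega) (by omega))).mul_right hgg

end Relations

section Isotypic

variable {K : Type} [Field K] {r n : ℕ} {q : K} {ζ : K}
variable {M : Type} [AddCommGroup M] [Module K M] [Module (Y K r n q) M]
  [IsScalarTower K (Y K r n q) M]

lemma t_pow_smul_of_mem_Imu {χ : Fin n → Fin r} {m : M} (hm : m ∈ Imu K r n q M ζ χ)
    (j : Fin n) (s : ℕ) : t K r n q j ^ s • m = (ζ ^ (χ j : ℕ)) ^ s • m := by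
  induction s with
  | zero => simp
  | succ s ih => rw [pow_succ, mul_smul, hm j, smul_comm, ih, smul_smul, pow_succ']

lemma smul_mem_Imu_of_commute {y : Y K r n q} (hy : ∀ j, Commute (t K r n q j) y)
    {χ : Fin n → Fin r} {m : M} (hm : m ∈ Imu K r n q M ζ χ) : y • m ∈ Imu K r n q M ζ χ :=
  fun j => by rw [← mul_smul, (hy j).eq, mul_smul, hm j, smul_comm]

lemma aeval_X_smul_mem_Imu (f : K[X]) (p : Fin n) {χ : Fin n → Fin r} {m : M}
    (hm : m ∈ Imu K r n q M ζ χ) : aeval (X K r n q p) f • m ∈ Imu K r n q M ζ χ :=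
  smul_mem_Imu_of_commute (fun j => (commute_t_X j p).aeval_right f) hm

lemma g_smul_mem_Imu {χ : Fin n → Fin r} {m : M} (hm : m ∈ Imu K r n q M ζ χ)
    (i : ℕ) (hi : i + 1 < n) : g K r n q i hi • m ∈ Imu K r n q M ζ (χ ∘ swapi n i hi) :=
  fun j => by rw [← mul_smul, t_mul_g, mul_smul, hm, smul_comm]; rfl

/-- On `I_χ M`, `t_i^s t_{i+1}^{-s}` acts by `(ζ^{χ i} / ζ^{χ (i+1)})^s`, a nontrivial `r`-th root
of unity when `χ i ≠ χ (i+1)`, so the average `e_i` vanishes. -/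
lemma e_smul_eq_zero (hζ : IsPrimitiveRoot ζ r) (i : ℕ) (hi : i + 1 < n)
    {χ : Fin n → Fin r} (hχ : χ ⟨i, by omega⟩ ≠ χ ⟨i + 1, hi⟩) {m : M}
    (hm : m ∈ Imu K r n q M ζ χ) : e K r n q i hi • m = 0 := by
  set a := ζ ^ (χ ⟨i, by omega⟩ : ℕ)
  set b := ζ ^ (χ ⟨i + 1, hi⟩ : ℕ)
  have hb : b ^ r = 1 := by rw [← pow_mul, mul_comm, pow_mul, hζ.pow_eq_one, one_pow]
  have hb0 : b ≠ 0 := pow_ne_zero _ (hζ.ne_zero (Fin.pos (χ ⟨i, by omega⟩)).ne')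
  have hab : a / b ≠ 1 := fun h =>
    hχ (Fin.ext (hζ.pow_inj (Fin.is_lt _) (Fin.is_lt _) ((div_eq_one_iff_eq hb0).1 h)))
  have hab_pow : (a / b) ^ r = 1 := by
    rw [div_pow, hb, div_one, ← pow_mul, mul_comm, pow_mul, hζ.pow_eq_one, one_pow]
  have hterm : ∀ s ∈ Finset.range r,
      (t K r n q ⟨i, by omega⟩ ^ s * t K r n q ⟨i + 1, hi⟩ ^ ((r - s) % r)) • m
        = (a / b) ^ s • m := by
    intro s hs
    have hinv : b ^ ((r - s) % r) = (b ^ s)⁻¹ :=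
      eq_inv_of_mul_eq_one_left (pow_sub_mod_mul_pow hb (Finset.mem_range.1 hs))
    rw [mul_smul, t_pow_smul_of_mem_Imu hm, smul_comm, t_pow_smul_of_mem_Imu hm, smul_smul,
      hinv, div_pow, div_eq_mul_inv, mul_comm]
  rw [e_eq, smul_assoc, Finset.sum_smul, Finset.sum_congr rfl hterm, ← Finset.sum_smul,
    geom_sum_eq_zero_of_pow_eq_one hab hab_pow, zero_smul, smul_zero]

lemma g_smul_g_smul (hζ : IsPrimitiveRoot ζ r) (i : ℕ) (hi : i + 1 < n)
    {χ : Fin n → Fin r} (hχ : χ ⟨i, by omega⟩ ≠ χ ⟨i + 1, hi⟩) {m : M}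
    (hm : m ∈ Imu K r n q M ζ χ) : g K r n q i hi • g K r n q i hi • m = m := by
  rw [← mul_smul, g_mul_g_self, add_smul, one_smul, smul_assoc, mul_smul,
    e_smul_eq_zero hζ i hi (comp_swapi_ne hi hχ) (g_smul_mem_Imu hm i hi), smul_zero, add_zero]

end Isotypic

section Projections

variable (K : Type) [Field K] (r n : ℕ) (q : K)

def eigenProj (ζ : K) (j : Fin n) (a : ℕ) : Y K r n q :=
  (r : K)⁻¹ • ∑ s ∈ Finset.range r, ((ζ ^ a)⁻¹ • t K r n q j) ^ s

variable {K r n q} {ζ : K}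

lemma commute_t_eigenProj (k j : Fin n) (a : ℕ) :
    Commute (t K r n q k) (eigenProj K r n q ζ j a) :=
  .smul_right (.sum_right _ _ _ fun s _ => (((commute_t_t k j).smul_right _).pow_right s)) _

lemma t_mul_eigenProj (hζ : IsPrimitiveRoot ζ r) (hr : r ≠ 0) (j : Fin n) (a : ℕ) :
    t K r n q j * eigenProj K r n q ζ j a = ζ ^ a • eigenProj K r n q ζ j a := by
  have hζa : ζ ^ a ≠ 0 := pow_ne_zero _ (hζ.ne_zero hr)
  set x := (ζ ^ a)⁻¹ • t K r n q j
  have hx : x ^ r = 1 := by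
    rw [_root_.smul_pow, t_pow_r, inv_pow, ← pow_mul, mul_comm, pow_mul, hζ.pow_eq_one, one_pow,
      inv_one, one_smul]
  -- `(x - 1) ∑_{s<r} x^s = x^r - 1 = 0`
  have hfix : x * ∑ s ∈ Finset.range r, x ^ s = ∑ s ∈ Finset.range r, x ^ s := by
    rw [← sub_eq_zero, ← sub_one_mul, mul_geom_sum, hx, sub_self]
  have ht : t K r n q j = ζ ^ a • x := by rw [smul_smul, mul_inv_cancel₀ hζa, one_smul]
  show t K r n q j * ((r : K)⁻¹ • ∑ s ∈ Finset.range r, x ^ s)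
    = ζ ^ a • ((r : K)⁻¹ • ∑ s ∈ Finset.range r, x ^ s)
  rw [mul_smul_comm, ht, smul_mul_assoc, hfix, smul_comm]

lemma sum_eigenProj (hζ : IsPrimitiveRoot ζ r) (hrK : (r : K) ≠ 0) (j : Fin n) :
    ∑ a ∈ Finset.range r, eigenProj K r n q ζ j a = 1 := by
  have hr : 0 < r := Nat.pos_of_ne_zero fun h => hrK (by rw [h, Nat.cast_zero])
  have hcoeff : ∀ s ∈ Finset.range r, s ≠ 0 → ∑ a ∈ Finset.range r, ((ζ ^ s)⁻¹) ^ a = 0 :=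
    fun s hs hs0 => geom_sum_eq_zero_of_pow_eq_one
      (inv_ne_one.2 (hζ.pow_ne_one_of_pos_of_lt hs0 (Finset.mem_range.1 hs)))
      (by rw [inv_pow, ← pow_mul, mul_comm, pow_mul, hζ.pow_eq_one, one_pow, inv_one])
  have hterm : ∀ s ∈ Finset.range r, ∑ a ∈ Finset.range r, ((ζ ^ a)⁻¹ • t K r n q j) ^ s
      = (∑ a ∈ Finset.range r, ((ζ ^ s)⁻¹) ^ a) • t K r n q j ^ s := fun s _ => by
    rw [Finset.sum_smul]
    refine Finset.sum_congr rfl fun a _ => ?_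
    rw [_root_.smul_pow, inv_pow, inv_pow, ← pow_mul, ← pow_mul, mul_comm]
  simp only [eigenProj, ← Finset.smul_sum]
  rw [Finset.sum_comm, Finset.sum_congr rfl hterm, Finset.sum_eq_single_of_mem 0
    (Finset.mem_range.2 hr) fun s hs hs0 => by rw [hcoeff s hs hs0, zero_smul]]
  simp [hrK]

end Projections

section Decomposition

variable {K : Type} [Field K] {r n : ℕ} {q : K} {ζ : K}
variable {M : Type} [AddCommGroup M] [Module K M] [Module (Y K r n q) M]
  [IsScalarTower K (Y K r n q) M]

lemma iSup_Imu_eq_top (hζ : IsPrimitiveRoot ζ r) (hrK : (r : K) ≠ 0) :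
    ⨆ χ : Fin n → Fin r, Imu K r n q M ζ χ = ⊤ := by
  have hr : 0 < r := Nat.pos_of_ne_zero fun h => hrK (by rw [h, Nat.cast_zero])
  -- induction on the set `s` of positions where `m` is not yet known to be a `t_k`-eigenvector
  suffices h : ∀ (s : Finset (Fin n)) (χ : Fin n → Fin r) (m : M),
      (∀ k ∉ s, t K r n q k • m = ζ ^ (χ k : ℕ) • m) → m ∈ ⨆ χ, Imu K r n q M ζ χ from
    eq_top_iff.2 fun m _ => h Finset.univ (fun _ => ⟨0, hr⟩) m (by simp)
  intro s
  induction s using Finset.induction_on with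
  | empty => exact fun χ m hm => Submodule.mem_iSup_of_mem χ fun k => hm k (Finset.notMem_empty k)
  | insert j s _ ih =>
    intro χ m hm
    rw [← one_smul (Y K r n q) m, ← sum_eigenProj (q := q) hζ hrK j, Finset.sum_smul]
    refine Submodule.sum_mem _ fun a ha =>
      ih (Function.update χ j ⟨a, Finset.mem_range.1 ha⟩) _ fun k hk => ?_
    rw [← mul_smul]
    by_cases hkj : k = j
    · subst hkj
      rw [t_mul_eigenProj hζ hr.ne', Function.update_self, smul_assoc]
    · rw [(commute_t_eigenProj k j a).eq, mul_smul, hm k (by simp [hkj, hk]), smul_comm,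
        Function.update_of_ne hkj]

lemma smul_eq_zero_of_forall_mem_Imu (hζ : IsPrimitiveRoot ζ r) (hrK : (r : K) ≠ 0)
    {y : Y K r n q} (hy : ∀ χ, ∀ m ∈ Imu K r n q M ζ χ, y • m = 0) (m : M) : y • m = 0 := by
  have hm : m ∈ ⨆ χ, Imu K r n q M ζ χ := by rw [iSup_Imu_eq_top hζ hrK]; trivial
  exact Submodule.iSup_induction _ (motive := fun m => y • m = 0) hm hy (smul_zero y)
    fun m m' h h' => by rw [smul_add, h, h', add_zero]

end Decomposition

section Transport

variable (K : Type) [Field K] (r n : ℕ) (q : K)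
variable (M : Type) [AddCommGroup M] [Module K M] [Module (Y K r n q) M]
  [IsScalarTower K (Y K r n q) M]

/-- `f(Y_p)` annihilates `Hom_{KT}(V(χ), I_χ M)`, on which `Y_p` acts as `X_p`. -/
def AnnihilatesIsotypic (ζ : K) (f : K[X]) (χ : Fin n → Fin r) (p : Fin n) : Prop :=
  ∀ m ∈ Imu K r n q M ζ χ, aeval (X K r n q p) f • m = 0

variable {K r n q M} {ζ : K}

lemma aeval_X_swapi_smul_g_smul (hζ : IsPrimitiveRoot ζ r) (i : ℕ) (hi : i + 1 < n)
    {χ : Fin n → Fin r} (hχ : χ ⟨i, by omega⟩ ≠ χ ⟨i + 1, hi⟩) (f : K[X]) (p : Fin n) {m : M}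
    (hm : m ∈ Imu K r n q M ζ χ) :
    aeval (X K r n q (swapi n i hi p)) f • g K r n q i hi • m
      = g K r n q i hi • aeval (X K r n q p) f • m := by
  have hX : ∀ χ', ∀ w ∈ (Imu K r n q M ζ χ' : Set M),
      X K r n q ⟨i, by omega⟩ • w ∈ (Imu K r n q M ζ χ' : Set M) :=
    fun _ _ hw => smul_mem_Imu_of_commute (fun j => commute_t_X j _) hw
  have hgm := g_smul_mem_Imu hm i hi
  have hχ' := comp_swapi_ne hi hχ
  obtain ⟨p, hp⟩ := p
  by_cases hpi : p = i
  · subst hpi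
    rw [swapi_apply_left, X_succ]
    exact aeval_mul_mul_smul_smul (hX χ) (fun w hw => g_smul_g_smul hζ p hi hχ hw) f hm
  by_cases hpi' : p = i + 1
  · subst hpi'
    rw [swapi_apply_right, X_succ]
    conv_rhs => rw [← g_smul_g_smul hζ i hi hχ hm]
    rw [aeval_mul_mul_smul_smul (hX _) (fun w hw => g_smul_g_smul hζ i hi hχ' hw) f hgm,
      g_smul_g_smul hζ i hi hχ' (aeval_X_smul_mem_Imu f _ hgm)]
  · have hfix : swapi n i hi ⟨p, hp⟩ = ⟨p, hp⟩ := by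
      ext
      rw [val_swapi]
      simp [hpi, hpi']
    rw [hfix, ← mul_smul, ← mul_smul, ((commute_g_X i hi hp hpi hpi').aeval_right f).eq]

lemma AnnihilatesIsotypic.comp_swapi (hζ : IsPrimitiveRoot ζ r) {i : ℕ} (hi : i + 1 < n)
    {χ : Fin n → Fin r} (hχ : χ ⟨i, by omega⟩ ≠ χ ⟨i + 1, hi⟩) {f : K[X]} {p : Fin n}
    (h : AnnihilatesIsotypic K r n q M ζ f χ p) :
    AnnihilatesIsotypic K r n q M ζ f (χ ∘ swapi n i hi) (swapi n i hi p) := by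
  intro m hm
  have hgm : g K r n q i hi • m ∈ Imu K r n q M ζ χ := by
    simpa only [comp_swapi_comp_swapi] using g_smul_mem_Imu hm i hi
  rw [← g_smul_g_smul hζ i hi (comp_swapi_ne hi hχ) hm,
    aeval_X_swapi_smul_g_smul hζ i hi hχ f p hgm, h _ hgm, smul_zero]

theorem annihilatesIsotypic_of_isLeast (hζ : IsPrimitiveRoot ζ r) (f : K[X])
    (h0 : ∀ m : M, aeval (X1 K r n q) f • m = 0) (χ : Fin n → Fin r) (p : Fin n)
    (hp : IsLeast {j | χ j = χ p} p) : AnnihilatesIsotypic K r n q M ζ f χ p := by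
  obtain ⟨p, hpn⟩ := p
  induction p generalizing χ with
  | zero => exact fun m _ => h0 m
  | succ p ih =>
    have hχ : χ ⟨p, by omega⟩ ≠ χ ⟨p + 1, hpn⟩ := fun h => by
      simpa [Fin.le_def] using hp.2 h
    have hleast := isLeast_fiber_comp_swapi hpn hχ hp
    rw [swapi_apply_right] at hleast
    have := (ih (χ ∘ swapi n p hpn) (by omega) hleast).comp_swapi hζ hpn (comp_swapi_ne hpn hχ)
    rwa [comp_swapi_comp_swapi, swapi_apply_left] at this

/-- Bubble sort: swapping an adjacent descent of `χ` decreases `χ` lexicographically. -/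
theorem annihilatesIsotypic_of_monotone (hζ : IsPrimitiveRoot ζ r) (f : K[X])
    (hmono : ∀ χ : Fin n → Fin r, Monotone χ → ∀ p, IsLeast {j | χ j = χ p} p →
      AnnihilatesIsotypic K r n q M ζ f χ p)
    (χ : Fin n → Fin r) (p : Fin n) (hp : IsLeast {j | χ j = χ p} p) :
    AnnihilatesIsotypic K r n q M ζ f χ p := by
  suffices h : ∀ l : Lex (Fin n → Fin r), ∀ p, IsLeast {j | ofLex l j = ofLex l p} p →
      AnnihilatesIsotypic K r n q M ζ f (ofLex l) p from h (toLex χ) p hp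
  intro l
  induction l using WellFoundedLT.induction with
  | _ l ih =>
    intro p hp
    by_cases hmon : Monotone (ofLex l)
    · exact hmono _ hmon p hp
    obtain ⟨i, hi, hdesc⟩ := Fin.exists_succ_lt_of_not_monotone hmon
    have hχ := hdesc.ne'
    have hlt : toLex (ofLex l ∘ swapi n i hi) < l :=
      Pi.lex_desc (Fin.le_def.2 (Nat.le_succ i)) hdesc
    have := (ih _ hlt _ (isLeast_fiber_comp_swapi hi hχ hp)).comp_swapi hζ hi
      (comp_swapi_ne hi hχ)
    rwa [comp_swapi_comp_swapi, swapi_swapi] at this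

end Transport

end YH

theorem statement19_general (K : Type) [Field K] (r n : ℕ) (hn : 0 < n)
    (hrK : (r : K) ≠ 0) (q : K)
    (ζ : K) (hζ : IsPrimitiveRoot ζ r)
    (lam : ℤ →₀ ℕ)
    (M : Type) [AddCommGroup M] [Module K M] [Module (YH.Y K r n q) M]
    [IsScalarTower K (YH.Y K r n q) M] :
    (∀ y ∈ TwoSidedIdeal.span
        {((lam.support.sort (· ≤ ·)).map
          (fun i => (YH.X1 K r n q - algebraMap K (YH.Y K r n q) (q ^ i)) ^ lam i)).prod},
        ∀ m : M, y • m = 0) ↔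
    (∀ (c : Fin n → Fin r), Monotone c →
      ∀ (k : Fin r) (fp : Fin n), c fp = k → (∀ j : Fin n, c j = k → fp ≤ j) →
        ∀ m ∈ YH.Imu K r n q M ζ c,
          (((lam.support.sort (· ≤ ·)).map
            (fun i => (YH.X K r n q fp - algebraMap K (YH.Y K r n q) (q ^ i)) ^ lam i)).prod)
            • m = 0) := by
  set f : K[X] := ((lam.support.sort (· ≤ ·)).map fun i => (X - C (q ^ i)) ^ lam i).prod
  have hf : ∀ x : YH.Y K r n q, ((lam.support.sort (· ≤ ·)).map
      fun i => (x - algebraMap K (YH.Y K r n q) (q ^ i)) ^ lam i).prod = aeval x f := fun x => by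
    simp [f, map_list_prod, Function.comp_def]
  simp only [hf]
  constructor
  · intro hJ c _ k fp hfp hmin
    exact YH.annihilatesIsotypic_of_isLeast hζ f (hJ _ (TwoSidedIdeal.subset_span rfl)) c fp
      ⟨rfl, fun j hj => hmin j (hj.trans hfp)⟩
  · intro hcyc y hy
    have hX1 : ∀ m : M, aeval (YH.X1 K r n q) f • m = 0 :=
      YH.smul_eq_zero_of_forall_mem_Imu hζ hrK fun χ =>
        YH.annihilatesIsotypic_of_monotone hζ f (fun c hc p hp => hcyc c hc _ p rfl hp.2)
          χ ⟨0, hn⟩ ⟨rfl, fun j _ => Nat.zero_le j⟩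
    exact TwoSidedIdeal.smul_eq_zero_of_mem_span (by simpa using hX1) hy

/-- Theorem 5.5 of the paper, cyclotomic Morita equivalence:
a finite-dimensional `Ŷ_{r,n}^K`-module `M` is annihilated by the two-sided
ideal `J_λ = ⟨f_λ⟩`, `f_λ = ∏_i (X_1 - qⁱ)^{λ_i}` (i.e. `M` is a module over the
cyclotomic quotient `Y_{r,n}^{λ,K}`) if and only if, for every `μ ∈ C_r(n)`
(monotone block function `c`), the `Ĥ_{μ_1}^K ⊗ ⋯ ⊗ Ĥ_{μ_r}^K`-module
`Hom_{KT}(V(μ), I_μM)` (identified with `I_μM`, on which `Y_k` acts as `X_k`)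
is annihilated by the cyclotomic relations `∏_i (Y_{b̄_{k-1}+1} - qⁱ)^{λ_i}` at
the first position `fp` of each block `k`, i.e. is a module over
`H_{μ_1}^{λ,K} ⊗ ⋯ ⊗ H_{μ_r}^{λ,K}`.  (Hence the category equivalence `F`
restricts to an equivalence `Y_{r,n}^{λ,K}`-mod `≃` `H_{r,n}^{λ,K}`-mod.) -/
theorem statement19 (K : Type) [Field K] [IsAlgClosed K] (r n : ℕ) (hr : 0 < r) (hn : 0 < n)
    (hrK : (r : K) ≠ 0) (q : K) (hq : q ≠ 0)
    (ζ : K) (hζ : IsPrimitiveRoot ζ r)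
    (lam : ℤ →₀ ℕ)
    (M : Type) [AddCommGroup M] [Module K M] [Module (YH.Y K r n q) M]
    [IsScalarTower K (YH.Y K r n q) M] [FiniteDimensional K M] :
    (∀ y ∈ TwoSidedIdeal.span
        {((lam.support.sort (· ≤ ·)).map
          (fun i => (YH.X1 K r n q - algebraMap K (YH.Y K r n q) (q ^ i)) ^ lam i)).prod},
        ∀ m : M, y • m = 0) ↔
    (∀ (c : Fin n → Fin r), Monotone c →
      ∀ (k : Fin r) (fp : Fin n), c fp = k → (∀ j : Fin n, c j = k → fp ≤ j) →
        ∀ m ∈ YH.Imu K r n q M ζ c,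
          (((lam.support.sort (· ≤ ·)).map
            (fun i => (YH.X K r n q fp - algebraMap K (YH.Y K r n q) (q ^ i)) ^ lam i)).prod)
            • m = 0) :=
  statement19_general K r n hn hrK q ζ hζ lam M
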